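/- Suppose W ≥ 2. Then the maximum entry of the random demodulator matrix satisfies the tail bound P( max_{r,ω} |Φ_{r,ω}| > √(10·log W / R) ) ≤ 1/W. -/

import Mathlib

open MeasureTheory ProbabilityTheory Matrix
open scoped BigOperators ENNReal

noncomputable section

/-- The `W×W` unitary discrete Fourier transform matrix,
`F_{n,ω} = W^{-1/2}·exp(-2πi·n·ω/W)`. -/
def dftMatrix (W : ℕ) : Matrix (Fin W) (Fin W) ℂ := fun n w =>
  (Real.sqrt W : ℂ)⁻¹ *
    Complex.exp (-2 * Real.pi * Complex.I * (n.val : ℂ) * (w.val : ℂ) / (W : ℂ))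

/-- The `R×W` accumulate-and-dump sampling matrix `H`:
`H_{r,j} = 1` iff `r·(W/R) ≤ j < (r+1)·(W/R)`. -/
def sampMatrix (W R : ℕ) : Matrix (Fin R) (Fin W) ℂ := fun r j =>
  if r.val * (W / R) ≤ j.val ∧ j.val < (r.val + 1) * (W / R) then 1 else 0

/-- The random demodulator matrix `Φ = H·D·F` for the sign sequence `ε`. -/
def demodMatrix (W R : ℕ) (ε : Fin W → ℝ) : Matrix (Fin R) (Fin W) ℂ :=
  sampMatrix W R * Matrix.diagonal (fun j => (ε j : ℂ)) * dftMatrix W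

/-- Spectral (`ℓ2 → ℓ2` operator) norm of a complex matrix. -/
def specNorm {m n : Type} [Fintype m] [Fintype n] [DecidableEq n]
    (A : Matrix m n ℂ) : ℝ :=
  ‖LinearMap.toContinuousLinearMap (Matrix.toEuclideanLin A)‖

/-- Frobenius norm of a complex matrix. -/
def frobNorm {m n : Type} [Fintype m] [Fintype n] (A : Matrix m n ℂ) : ℝ :=
  Real.sqrt (∑ i, ∑ j, ‖A i j‖ ^ 2)

/-- ℓ1 norm of a complex vector. -/
def l1norm {n : Type} [Fintype n] (v : n → ℂ) : ℝ := ∑ i, ‖v i‖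

/-- ℓ2 norm of a complex vector. -/
def l2norm {n : Type} [Fintype n] (v : n → ℂ) : ℝ :=
  Real.sqrt (∑ i, ‖v i‖ ^ 2)

/-- `ε` is a family of `W` independent Rademacher random variables on `(Ωp, μ)`:
each coordinate is measurable, takes only the values `±1`, takes each value with
probability `1/2`, and the coordinates are jointly independent. -/
def IsRademacherFamily {Ωp : Type} [MeasurableSpace Ωp] (μ : Measure Ωp) {W : ℕ}
    (ε : Ωp → Fin W → ℝ) : Prop :=
  (∀ j, Measurable (fun x => ε x j)) ∧
  (∀ x j, ε x j = 1 ∨ ε x j = -1) ∧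
  (∀ j, μ {x | ε x j = 1} = 1 / 2) ∧
  iIndepFun (fun j x => ε x j) μ

/-!
Each entry is a Rademacher sum `Φ_{r,ω} = ∑_j ε_j z_j` with `z_j = H_{r,j} F_{j,ω}`, and since
`|F_{j,ω}|² = 1/W` while a row of `H` has `W/R` ones, `∑_j |z_j|² ≤ 1/R`. Its real and imaginary
parts are sub-Gaussian (Hoeffding) with variance proxies adding up to at most `1/R`, so with
`K = 5 log W` each exceeds its share of the threshold `√(2K/R)` with probability at most
`2e^{-K}`, giving `P(|Φ_{r,ω}| > √(10 log W / R)) ≤ 4 W^{-5}`. A union bound over the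
`RW ≤ W²` entries leaves `4 W^{-3} ≤ 1/W`.
-/

open Real
open scoped NNReal

lemma Complex.sqrt_lt_abs_re_or_sqrt_lt_abs_im {z : ℂ} {a b : ℝ} (ha : 0 ≤ a) (hb : 0 ≤ b)
    (h : √(a + b) < ‖z‖) : √a < |z.re| ∨ √b < |z.im| := by
  by_contra! hle
  have hre : z.re ^ 2 ≤ a := by
    simpa [sq_abs, sq_sqrt ha] using pow_le_pow_left₀ (abs_nonneg _) hle.1 2
  have him : z.im ^ 2 ≤ b := by
    simpa [sq_abs, sq_sqrt hb] using pow_le_pow_left₀ (abs_nonneg _) hle.2 2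
  rw [Complex.norm_eq_sqrt_sq_add_sq] at h
  exact h.not_ge (sqrt_le_sqrt (add_le_add hre him))

namespace ProbabilityTheory.HasSubgaussianMGF

variable {Ω : Type*} [MeasurableSpace Ω] {μ : Measure Ω} [IsFiniteMeasure μ] {X : Ω → ℝ}
  {c : ℝ≥0}

lemma measure_sqrt_lt_abs_le (h : HasSubgaussianMGF X c μ) {K : ℝ} (hK : 0 ≤ K) :
    μ {ω | √(2 * K * c) < |X ω|} ≤ ENNReal.ofReal (2 * exp (-K)) := by
  rcases eq_zero_or_pos c with rfl | hc
  · refine (measure_eq_zero_iff_ae_notMem.2 ?_).trans_le zero_le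
    exact h.ae_eq_zero_of_hasSubgaussianMGF_zero.mono fun ω hω => by simp [hω]
  set s := √(2 * K * c)
  have hexp : -s ^ 2 / (2 * c) = -K := by
    rw [sq_sqrt (by positivity)]
    field_simp
  have htail : ∀ Y : Ω → ℝ, HasSubgaussianMGF Y c μ →
      μ {ω | s ≤ Y ω} ≤ ENNReal.ofReal (exp (-K)) := fun Y hY =>
    (ENNReal.le_ofReal_iff_toReal_le (measure_ne_top _ _) (exp_pos _).le).2
      (hexp ▸ hY.measure_ge_le (sqrt_nonneg _))
  calc μ {ω | s < |X ω|}
      ≤ μ ({ω | s ≤ X ω} ∪ {ω | s ≤ -X ω}) := measure_mono fun ω (hω : s < |X ω|) => by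
        rcases lt_abs.1 hω with hpos | hneg
        exacts [Or.inl hpos.le, Or.inr hneg.le]
    _ ≤ μ {ω | s ≤ X ω} + μ {ω | s ≤ -X ω} := measure_union_le _ _
    _ ≤ ENNReal.ofReal (exp (-K)) + ENNReal.ofReal (exp (-K)) :=
        add_le_add (htail X h) (htail _ h.neg)
    _ = ENNReal.ofReal (2 * exp (-K)) := by
        rw [← ENNReal.ofReal_add (exp_pos _).le (exp_pos _).le, two_mul]

end ProbabilityTheory.HasSubgaussianMGF

namespace IsRademacherFamily

variable {Ωp : Type} [MeasurableSpace Ωp] {μ : Measure Ωp} {W : ℕ} {ε : Ωp → Fin W → ℝ}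

lemma comp_eq_indicator (hrad : IsRademacherFamily μ ε) (g : ℝ → ℝ) (j : Fin W) :
    (fun x => g (ε x j)) = {x | ε x j = 1}.indicator (fun _ => g 1)
      + {x | ε x j = 1}ᶜ.indicator (fun _ => g (-1)) := by
  funext x
  rcases hrad.2.1 x j with h | h <;> norm_num [Set.indicator, h]

lemma integrable_comp [IsFiniteMeasure μ] (hrad : IsRademacherFamily μ ε) (g : ℝ → ℝ)
    (j : Fin W) : Integrable (fun x => g (ε x j)) μ := by
  have hA : MeasurableSet {x | ε x j = 1} := hrad.1 j (measurableSet_singleton 1)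
  rw [hrad.comp_eq_indicator g j]
  exact ((integrable_const _).indicator hA).add ((integrable_const _).indicator hA.compl)

lemma integral_comp [IsProbabilityMeasure μ] (hrad : IsRademacherFamily μ ε) (g : ℝ → ℝ)
    (j : Fin W) : ∫ x, g (ε x j) ∂μ = (g 1 + g (-1)) / 2 := by
  have hA : MeasurableSet {x | ε x j = 1} := hrad.1 j (measurableSet_singleton 1)
  have hμA : μ.real {x | ε x j = 1} = 1 / 2 := by simp [measureReal_def, hrad.2.2.1 j]
  have hμAc : μ.real {x | ε x j = 1}ᶜ = 1 / 2 := by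
    rw [measureReal_compl hA, hμA, probReal_univ]
    norm_num
  rw [hrad.comp_eq_indicator g j,
    integral_add' ((integrable_const _).indicator hA) ((integrable_const _).indicator hA.compl),
    integral_indicator_const _ hA, integral_indicator_const _ hA.compl, hμA, hμAc]
  simp only [smul_eq_mul]
  ring

lemma hasSubgaussianMGF_const_mul [IsProbabilityMeasure μ] (hrad : IsRademacherFamily μ ε)
    (c : ℝ) (j : Fin W) : HasSubgaussianMGF (fun x => c * ε x j) (‖c‖₊ ^ 2) μ where
  integrable_exp_mul t := hrad.integrable_comp (fun y => exp (t * (c * y))) j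
  mgf_le t := by
    rw [mgf, hrad.integral_comp (fun y => exp (t * (c * y))) j]
    calc (exp (t * (c * 1)) + exp (t * (c * -1))) / 2 = cosh (t * c) := by
          rw [cosh_eq]
          ring_nf
      _ ≤ exp ((t * c) ^ 2 / 2) := cosh_le_exp_half_sq _
      _ = exp ((‖c‖₊ ^ 2 : ℝ≥0) * t ^ 2 / 2) := by
          push_cast
          rw [norm_eq_abs, sq_abs]
          ring_nf

lemma hasSubgaussianMGF_sum [IsProbabilityMeasure μ] (hrad : IsRademacherFamily μ ε)
    (c : Fin W → ℝ) :
    HasSubgaussianMGF (fun x => ∑ j, c j * ε x j) (∑ j, ‖c j‖₊ ^ 2) μ :=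
  HasSubgaussianMGF.sum_of_iIndepFun
    (hrad.2.2.2.comp (fun j y => c j * y) fun _ => measurable_const.mul measurable_id)
    fun j _ => hrad.hasSubgaussianMGF_const_mul (c j) j

lemma measure_sqrt_lt_norm_sum_le [IsProbabilityMeasure μ] (hrad : IsRademacherFamily μ ε)
    (z : Fin W → ℂ) {K σ : ℝ} (hK : 0 ≤ K) (hσ : ∑ j, ‖z j‖ ^ 2 ≤ σ) :
    μ {x | √(2 * K * σ) < ‖∑ j, (ε x j : ℂ) * z j‖} ≤ ENNReal.ofReal (4 * exp (-K)) := by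
  set a : ℝ≥0 := ∑ j, ‖(z j).re‖₊ ^ 2
  set b : ℝ≥0 := ∑ j, ‖(z j).im‖₊ ^ 2
  have hab : 2 * K * a + 2 * K * b ≤ 2 * K * σ := by
    have hsum : (a : ℝ) + b = ∑ j, ‖z j‖ ^ 2 := by
      push_cast [a, b]
      rw [← Finset.sum_add_distrib]
      refine Finset.sum_congr rfl fun j _ => ?_
      rw [norm_eq_abs, norm_eq_abs, sq_abs, sq_abs, Complex.sq_norm, Complex.normSq_apply, sq, sq]
    rw [← mul_add, hsum]
    exact mul_le_mul_of_nonneg_left hσ (by positivity)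
  calc μ {x | √(2 * K * σ) < ‖∑ j, (ε x j : ℂ) * z j‖}
      ≤ μ ({x | √(2 * K * a) < |∑ j, (z j).re * ε x j|}
          ∪ {x | √(2 * K * b) < |∑ j, (z j).im * ε x j|}) := measure_mono fun x hx => by
        have := Complex.sqrt_lt_abs_re_or_sqrt_lt_abs_im (by positivity) (by positivity)
          ((sqrt_le_sqrt hab).trans_lt hx)
        simpa [Complex.re_sum, Complex.im_sum, mul_comm] using this
    _ ≤ ENNReal.ofReal (2 * exp (-K)) + ENNReal.ofReal (2 * exp (-K)) :=
        (measure_union_le _ _).trans <| add_le_add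
          ((hrad.hasSubgaussianMGF_sum _).measure_sqrt_lt_abs_le hK)
          ((hrad.hasSubgaussianMGF_sum _).measure_sqrt_lt_abs_le hK)
    _ = ENNReal.ofReal (4 * exp (-K)) := by
        rw [← ENNReal.ofReal_add (by positivity) (by positivity)]
        ring_nf

end IsRademacherFamily

lemma norm_dftMatrix (W : ℕ) (n w : Fin W) : ‖dftMatrix W n w‖ = (√W)⁻¹ := by
  have harg : -2 * (π : ℂ) * Complex.I * (n.val : ℂ) * (w.val : ℂ) / (W : ℂ)
      = ((-2 * π * n.val * w.val / W : ℝ) : ℂ) * Complex.I := by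
    push_cast
    ring
  rw [dftMatrix, norm_mul, harg, Complex.norm_exp_ofReal_mul_I, mul_one, norm_inv,
    Complex.norm_real, norm_of_nonneg (sqrt_nonneg _)]

lemma sum_norm_sampMatrix_sq_le (W R : ℕ) (r : Fin R) :
    ∑ j, ‖sampMatrix W R r j‖ ^ 2 ≤ (W / R : ℕ) := by
  set q := W / R
  have hentry : ∀ j : Fin W, ‖sampMatrix W R r j‖ ^ 2
      = if j.val ∈ Finset.Ico (r.val * q) ((r.val + 1) * q) then 1 else 0 := fun j => by
    simp only [sampMatrix, Finset.mem_Ico]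
    split_ifs <;> simp
  rw [Finset.sum_congr rfl fun j _ => hentry j,
    Fin.sum_univ_eq_sum_range (fun j => if j ∈ Finset.Ico (r.val * q) ((r.val + 1) * q)
      then (1 : ℝ) else 0) W, Finset.sum_boole, Finset.filter_mem_eq_inter]
  have hcard : (Finset.Ico (r.val * q) ((r.val + 1) * q)).card = q := by
    rw [Nat.card_Ico, Nat.succ_mul, Nat.add_sub_cancel_left]
  exact_mod_cast hcard ▸ Finset.card_le_card Finset.inter_subset_right

lemma sum_norm_sampMatrix_mul_dftMatrix_sq_le (W R : ℕ) (r : Fin R) (w : Fin W) :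
    ∑ j, ‖sampMatrix W R r j * dftMatrix W j w‖ ^ 2 ≤ 1 / R := by
  simp_rw [norm_mul, mul_pow, norm_dftMatrix, inv_pow, sq_sqrt (Nat.cast_nonneg _),
    ← Finset.sum_mul]
  rcases W.eq_zero_or_pos with rfl | hW
  · simp
  calc (∑ j, ‖sampMatrix W R r j‖ ^ 2) * (W : ℝ)⁻¹ ≤ (W / R : ℕ) * (W : ℝ)⁻¹ := by
        gcongr
        exact sum_norm_sampMatrix_sq_le W R r
    _ ≤ (W / R : ℝ) * (W : ℝ)⁻¹ := by
        gcongr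
        exact Nat.cast_div_le
    _ = 1 / R := by
        field_simp

lemma demodMatrix_apply (W R : ℕ) (e : Fin W → ℝ) (r : Fin R) (w : Fin W) :
    demodMatrix W R e r w = ∑ j, (e j : ℂ) * (sampMatrix W R r j * dftMatrix W j w) := by
  rw [demodMatrix, Matrix.mul_apply]
  exact Finset.sum_congr rfl fun j _ => by rw [Matrix.mul_diagonal]; ring

lemma IsRademacherFamily.measure_lt_norm_demodMatrix_le {Ωp : Type} [MeasurableSpace Ωp]
    {μ : Measure Ωp} [IsProbabilityMeasure μ] {W R : ℕ} {ε : Ωp → Fin W → ℝ}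
    (hrad : IsRademacherFamily μ ε) (r : Fin R) (w : Fin W) {K : ℝ} (hK : 0 ≤ K) :
    μ {x | √(2 * K / R) < ‖demodMatrix W R (ε x) r w‖} ≤ ENNReal.ofReal (4 * exp (-K)) := by
  simpa only [demodMatrix_apply, mul_one_div] using hrad.measure_sqrt_lt_norm_sum_le _ hK
    (sum_norm_sampMatrix_mul_dftMatrix_sq_le W R r w)

lemma measure_lt_iSup_iSup_le {Ω ι κ : Type*} [MeasurableSpace Ω] {μ : Measure Ω}
    [Fintype ι] [Fintype κ] [Nonempty ι] [Nonempty κ] {f : Ω → ι → κ → ℝ} {t : ℝ} {b : ℝ≥0∞}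
    (h : ∀ i k, μ {x | t < f x i k} ≤ b) :
    μ {x | t < ⨆ i, ⨆ k, f x i k} ≤ Fintype.card ι * Fintype.card κ * b := by
  calc μ {x | t < ⨆ i, ⨆ k, f x i k}
      ≤ μ (⋃ i, ⋃ k, {x | t < f x i k}) := measure_mono fun x (hx : t < _) => by
        obtain ⟨i, hi⟩ := exists_lt_of_lt_ciSup hx
        obtain ⟨k, hk⟩ := exists_lt_of_lt_ciSup hi
        exact Set.mem_iUnion₂.2 ⟨i, k, hk⟩
    _ ≤ ∑ i, ∑ k, μ {x | t < f x i k} :=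
        (measure_iUnion_fintype_le _ _).trans
          (Finset.sum_le_sum fun i _ => measure_iUnion_fintype_le _ _)
    _ ≤ ∑ _i : ι, ∑ _k : κ, b := Finset.sum_le_sum fun i _ => Finset.sum_le_sum fun k _ => h i k
    _ = Fintype.card ι * Fintype.card κ * b := by simp [mul_assoc]

lemma natCast_mul_mul_four_div_pow_five_le {R W : ℕ} (hRW : R ≤ W) (hW : 2 ≤ W) :
    (R * W * (4 / W ^ 5) : ℝ) ≤ 1 / W := by
  have hW' : (2 : ℝ) ≤ W := by exact_mod_cast hW
  calc (R * W * (4 / W ^ 5) : ℝ) ≤ W * W * (4 / W ^ 5) := by gcongr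
    _ = 4 / W ^ 2 * (1 / W) := by field_simp
    _ ≤ 1 * (1 / W) := by
        gcongr
        rw [div_le_one (by positivity)]
        nlinarith
    _ = 1 / W := one_mul _

/-- Tail bound for the maximum entry of the random demodulator matrix:
`P(max_{r,ω} |Φ_{r,ω}| > √(10·log W / R)) ≤ 1/W`. -/
theorem max_entry_tail_bound (W R : ℕ) (hR : 0 < R) (hdvd : R ∣ W) (hW : 2 ≤ W)
    {Ωp : Type} [MeasurableSpace Ωp] (μ : Measure Ωp) [IsProbabilityMeasure μ]
    (ε : Ωp → Fin W → ℝ) (hrad : IsRademacherFamily μ ε) :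
    μ {x | Real.sqrt (10 * Real.log W / R) <
        ⨆ r : Fin R, ⨆ w : Fin W, ‖demodMatrix W R (ε x) r w‖}
      ≤ (W : ℝ≥0∞)⁻¹ := by
  have : Nonempty (Fin R) := ⟨⟨0, hR⟩⟩
  have : Nonempty (Fin W) := ⟨⟨0, by omega⟩⟩
  have hW0 : (0 : ℝ) < W := by positivity
  have hentry (r : Fin R) (w : Fin W) : μ {x | √(10 * log W / R) < ‖demodMatrix W R (ε x) r w‖}
      ≤ ENNReal.ofReal (4 / W ^ 5) := by
    have hexp : exp (-(5 * log W)) = 1 / W ^ 5 := by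
      rw [exp_neg, one_div, show 5 * log W = log ((W : ℝ) ^ 5) by rw [log_pow]; norm_num,
        exp_log (by positivity)]
    have hthr : 2 * (5 * log W) / R = 10 * log W / R := by ring
    simpa only [hexp, hthr, mul_one_div] using
      hrad.measure_lt_norm_demodMatrix_le r w (K := 5 * log W) (by positivity)
  calc _ ≤ R * W * ENNReal.ofReal (4 / W ^ 5) := by
        simpa using measure_lt_iSup_iSup_le hentry
    _ = ENNReal.ofReal (R * W * (4 / W ^ 5)) := by
        rw [ENNReal.ofReal_mul (by positivity), ENNReal.ofReal_mul (by positivity)]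
        simp
    _ ≤ ENNReal.ofReal (1 / W) := ENNReal.ofReal_le_ofReal
        (natCast_mul_mul_four_div_pow_five_le (Nat.le_of_dvd (by omega) hdvd) hW)
    _ = (W : ℝ≥0∞)⁻¹ := by rw [one_div, ENNReal.ofReal_inv_of_pos hW0, ENNReal.ofReal_natCast]
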